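/- If C is a finitely based permutation class whose longest basis element has length m, then the class C^{+1} of one-point extensions of C is finitely based, with no basis element of length greater than m(m+1). -/

import Mathlib

/-!
Let `β` be a basis element of `C⁺¹` of length `n`. Deleting an entry `y` of `β` leaves a
permutation outside `C` which, by minimality, still lies in `C⁺¹`; so a second entry `z y` can be
deleted to land in `C`. Fix a basis element `B` of `C` inside `β`, with `|B| ≤ m`. Every entry `y`
outside `B` has `z y ∈ B`, since otherwise `B` would survive the deletion of `y` and `z y`.
If `n > m(m+1)`, more than `m |B|` entries lie outside `B`, so more than `m` of them share one
partner `z₀`. But `β` without `z₀` is not in `C`, hence contains a basis element `B'` of `C`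
avoiding `z₀`, and `B'` must contain every `y` with partner `z₀`: too many for `|B'| ≤ m`.
Finiteness follows, as there are finitely many permutations of bounded length.
-/

/-- `σ` is contained (as a pattern) in `π`. -/
def PermContains {k n : ℕ} (σ : Equiv.Perm (Fin k)) (π : Equiv.Perm (Fin n)) : Prop :=
  ∃ f : Fin k → Fin n, StrictMono f ∧ ∀ i j : Fin k, σ i < σ j ↔ π (f i) < π (f j)

/-- A permutation of arbitrary length. -/
abbrev Permutation := Σ n : ℕ, Equiv.Perm (Fin n)

/-- The containment quasi-order on permutations. -/
def PermLE (σ π : Permutation) : Prop := PermContains σ.2 π.2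

/-- Strict containment. -/
def PermLT (σ π : Permutation) : Prop := PermLE σ π ∧ ¬ PermLE π σ

/-- A permutation class: a set of permutations closed downward under containment. -/
def IsPermClass (C : Set Permutation) : Prop :=
  ∀ σ π : Permutation, PermLE σ π → π ∈ C → σ ∈ C

/-- `β` is a basis element of the class `C`: a minimal permutation not in `C`. -/
def IsBasisElt (C : Set Permutation) (β : Permutation) : Prop :=
  β ∉ C ∧ ∀ σ : Permutation, PermLT σ β → σ ∈ C

/-- The class of one-point extensions of `C`. -/
def OnePtExt (C : Set Permutation) : Set Permutation :=
  {π | π ∈ C ∨ ∃ σ ∈ C, PermLE σ π ∧ σ.1 + 1 = π.1}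

/-- `standardize g i` is the rank of `g i` among the entries of `g`. -/
noncomputable def standardize {k : ℕ} {α : Type*} [LinearOrder α] (g : Fin k → α) :
    Equiv.Perm (Fin k) :=
  (Tuple.sort g).symm

section Standardize

variable {k : ℕ} {α : Type*} [LinearOrder α] {g : Fin k → α}

theorem standardize_lt_standardize_iff (hg : Function.Injective g) (i j : Fin k) :
    standardize g i < standardize g j ↔ g i < g j := by
  have hsorted : StrictMono (g ∘ Tuple.sort g) :=
    (Tuple.monotone_sort g).strictMono_of_injective (hg.comp (Tuple.sort g).injective)
  simpa [standardize] using hsorted.lt_iff_lt (a := (Tuple.sort g).symm i)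
    (b := (Tuple.sort g).symm j) |>.symm

theorem Equiv.Perm.eq_of_lt_iff_lt {σ τ : Equiv.Perm (Fin k)}
    (h : ∀ i j, σ i < σ j ↔ τ i < τ j) : σ = τ := by
  have hmono : StrictMono (σ ∘ τ.symm) := fun a b hab => (h _ _).2 (by simpa using hab)
  exact Equiv.ext fun i => by simpa using congrFun hmono.eq_id (τ i)

theorem eq_standardize_iff (hg : Function.Injective g) {σ : Equiv.Perm (Fin k)} :
    σ = standardize g ↔ ∀ i j, σ i < σ j ↔ g i < g j := by
  refine ⟨?_, fun h => Equiv.Perm.eq_of_lt_iff_lt fun i j => ?_⟩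
  · rintro rfl
    exact standardize_lt_standardize_iff hg
  · rw [h, standardize_lt_standardize_iff hg]

end Standardize

noncomputable def patternOn {n : ℕ} (π : Equiv.Perm (Fin n)) (S : Finset (Fin n)) : Permutation :=
  ⟨S.card, standardize (π ∘ S.orderEmbOfFin rfl)⟩

section PatternOn

variable {n : ℕ} (π : Equiv.Perm (Fin n))

theorem patternOn_eq_of_card_eq {S : Finset (Fin n)} {k : ℕ} (h : S.card = k) :
    patternOn π S = ⟨k, standardize (π ∘ S.orderEmbOfFin h)⟩ := by
  subst h
  rfl

theorem patternOn_image {k : ℕ} {f : Fin k → Fin n} (hf : StrictMono f) :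
    patternOn π (Finset.univ.image f) = ⟨k, standardize (π ∘ f)⟩ := by
  have hcard : (Finset.univ.image f).card = k := by
    simp [Finset.card_image_of_injective _ hf.injective]
  rw [patternOn_eq_of_card_eq π hcard,
    ← Finset.orderEmbOfFin_unique hcard (fun i => Finset.mem_image_of_mem f (Finset.mem_univ i)) hf]

theorem patternOn_univ : patternOn π Finset.univ = ⟨n, π⟩ := by
  have himage : (Finset.univ : Finset (Fin n)) = Finset.univ.image id := by simp
  rw [himage, patternOn_image π strictMono_id]
  simp [standardize, Equiv.Perm.inv_def]

theorem patternOn_mono {S T : Finset (Fin n)} (hTS : T ⊆ S) :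
    PermLE (patternOn π T) (patternOn π S) := by
  let ι (i : Fin T.card) : Fin S.card :=
    (S.orderIsoOfFin rfl).symm ⟨_, hTS (T.orderEmbOfFin_mem rfl i)⟩
  have hι (i : Fin T.card) : S.orderEmbOfFin rfl (ι i) = T.orderEmbOfFin rfl i := by
    rw [← Finset.coe_orderIsoOfFin_apply, OrderIso.apply_symm_apply]
  show ∃ f : Fin T.card → Fin S.card, StrictMono f ∧ ∀ i j,
    standardize (π ∘ T.orderEmbOfFin rfl) i < standardize (π ∘ T.orderEmbOfFin rfl) j ↔
      standardize (π ∘ S.orderEmbOfFin rfl) (f i) < standardize (π ∘ S.orderEmbOfFin rfl) (f j)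
  refine ⟨ι, fun i j hij => (S.orderIsoOfFin rfl).symm.strictMono
    ((T.orderEmbOfFin rfl).strictMono hij), fun i j => ?_⟩
  rw [standardize_lt_standardize_iff (π.injective.comp (T.orderEmbOfFin rfl).injective),
    standardize_lt_standardize_iff (π.injective.comp (S.orderEmbOfFin rfl).injective)]
  simp only [Function.comp_apply, hι]

theorem permLE_patternOn_iff {S : Finset (Fin n)} {σ : Permutation} :
    PermLE σ (patternOn π S) ↔ ∃ T ⊆ S, σ = patternOn π T := by
  constructor
  · rintro ⟨f, hf, hσ⟩
    have hg : StrictMono (S.orderEmbOfFin rfl ∘ f) := (S.orderEmbOfFin rfl).strictMono.comp hf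
    refine ⟨Finset.univ.image (S.orderEmbOfFin rfl ∘ f), ?_, ?_⟩
    · exact Finset.image_subset_iff.2 fun i _ => S.orderEmbOfFin_mem rfl (f i)
    · rw [patternOn_image π hg]
      refine Sigma.ext rfl (heq_of_eq ((eq_standardize_iff (π.injective.comp hg.injective)).2
        fun i j => (hσ i j).trans ?_))
      exact standardize_lt_standardize_iff (π.injective.comp (S.orderEmbOfFin rfl).injective) _ _
  · rintro ⟨T, hTS, rfl⟩
    exact patternOn_mono π hTS

theorem permLE_iff_exists_patternOn {σ : Permutation} :
    PermLE σ ⟨n, π⟩ ↔ ∃ T, σ = patternOn π T := by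
  simp [← patternOn_univ π, permLE_patternOn_iff]

end PatternOn

theorem permLE_refl (σ : Permutation) : PermLE σ σ :=
  ⟨id, strictMono_id, fun _ _ => Iff.rfl⟩

theorem permLE_trans {σ τ ρ : Permutation} (hστ : PermLE σ τ) (hτρ : PermLE τ ρ) :
    PermLE σ ρ := by
  obtain ⟨f, hf, hfσ⟩ := hστ
  obtain ⟨g, hg, hgτ⟩ := hτρ
  exact ⟨g ∘ f, hg.comp hf, fun i j => (hfσ i j).trans (hgτ _ _)⟩

theorem PermLE.length_le {σ τ : Permutation} (h : PermLE σ τ) : σ.1 ≤ τ.1 := by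
  obtain ⟨f, hf, -⟩ := h
  simpa using Fintype.card_le_of_injective f hf.injective

theorem PermLE.eq_of_length_le {σ τ : Permutation} (h : PermLE σ τ) (hlen : τ.1 ≤ σ.1) :
    σ = τ := by
  obtain ⟨n, π⟩ := τ
  obtain ⟨T, rfl⟩ := (permLE_iff_exists_patternOn π).1 h
  have hT : T = Finset.univ :=
    Finset.eq_univ_of_card T (le_antisymm T.card_le_univ (by rw [Fintype.card_fin]; exact hlen))
  subst hT
  exact patternOn_univ π

theorem PermLT.length_lt {σ τ : Permutation} (h : PermLT σ τ) : σ.1 < τ.1 := by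
  by_contra! hlen
  exact h.2 (h.1.eq_of_length_le hlen ▸ permLE_refl σ)

theorem patternOn_lt_of_card_lt {n : ℕ} (π : Equiv.Perm (Fin n)) {S : Finset (Fin n)}
    (hS : S.card < n) : PermLT (patternOn π S) ⟨n, π⟩ :=
  have hle : PermLE (patternOn π S) ⟨n, π⟩ := (permLE_iff_exists_patternOn π).2 ⟨S, rfl⟩
  ⟨hle, fun hge => hS.not_ge hge.length_le⟩

theorem exists_isBasisElt_permLE {C : Set Permutation} {π : Permutation} (hπ : π ∉ C) :
    ∃ β, IsBasisElt C β ∧ PermLE β π := by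
  obtain ⟨β, ⟨hβπ, hβC⟩, hβmin⟩ := (measure fun σ : Permutation => σ.1).wf.has_min
    {σ | PermLE σ π ∧ σ ∉ C} ⟨π, permLE_refl π, hπ⟩
  refine ⟨β, ⟨hβC, fun σ hσβ => ?_⟩, hβπ⟩
  by_contra hσC
  exact hβmin σ ⟨permLE_trans hσβ.1 hβπ, hσC⟩ hσβ.length_lt

theorem card_le_of_forall_exists_compl_pair {α : Type*} [Fintype α] [DecidableEq α]
    (P : Finset α → Prop) (m : ℕ) (hP : ∀ ⦃S T⦄, T ⊆ S → P S → P T)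
    (hsmall : ∀ S, ¬ P S → ∃ B ⊆ S, ¬ P B ∧ B.card ≤ m)
    (hdel : ∀ y, ¬ P {y}ᶜ) (hpair : ∀ y, ∃ z, P {y, z}ᶜ) :
    Fintype.card α ≤ m * (m + 1) := by
  by_contra! hcard
  choose z hz using hpair
  have hmeet {B : Finset α} (hB : ¬ P B) (y : α) : y ∈ B ∨ z y ∈ B := by
    by_contra! h
    refine hB (hP (fun w hw => ?_) (hz y))
    simp only [Finset.mem_compl, Finset.mem_insert, Finset.mem_singleton]
    rintro (rfl | rfl)
    exacts [h.1 hw, h.2 hw]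
  obtain ⟨y₀⟩ : Nonempty α := Fintype.card_pos_iff.1 (by omega)
  obtain ⟨B, -, hB, hBm⟩ := hsmall _ (hdel y₀)
  have hmaps : ∀ y ∈ Bᶜ, z y ∈ B := fun y hy =>
    (hmeet hB y).resolve_left (Finset.mem_compl.1 hy)
  have hlt : B.card * m < Bᶜ.card := by
    have hmul : B.card * m ≤ m * m := Nat.mul_le_mul_right m hBm
    have hsq : m * (m + 1) = m * m + m := by ring
    rw [Finset.card_compl]
    omega
  obtain ⟨z₀, -, hfiber⟩ := Finset.exists_lt_card_fiber_of_mul_lt_card_of_maps_to hmaps hlt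
  obtain ⟨B', hB'z₀, hB', hB'm⟩ := hsmall _ (hdel z₀)
  have hz₀ : z₀ ∉ B' := fun h => by simpa using hB'z₀ h
  have hfiber_sub : {y ∈ Bᶜ | z y = z₀} ⊆ B' := fun y hy =>
    (hmeet hB' y).resolve_right ((Finset.mem_filter.1 hy).2 ▸ hz₀)
  exact (hfiber.trans_le (Finset.card_le_card hfiber_sub)).not_ge hB'm

theorem IsBasisElt.length_le_of_onePtExt {C : Set Permutation} (hC : IsPermClass C) {m : ℕ}
    (hm : ∀ β : Permutation, IsBasisElt C β → β.1 ≤ m) {β : Permutation}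
    (hβ : IsBasisElt (OnePtExt C) β) : β.1 ≤ m * (m + 1) := by
  obtain ⟨n, π⟩ := β
  obtain ⟨hβext, hβmin⟩ := hβ
  have hcard_compl (y : Fin n) : ({y}ᶜ : Finset (Fin n)).card + 1 = n := by
    have := y.pos
    rw [Finset.card_compl, Finset.card_singleton, Fintype.card_fin]
    omega
  have hdel (y : Fin n) : patternOn π {y}ᶜ ∉ C := fun hy =>
    hβext (Or.inr ⟨_, hy, (permLE_iff_exists_patternOn π).2 ⟨_, rfl⟩, hcard_compl y⟩)
  have hpair (y : Fin n) : ∃ z, patternOn π {y, z}ᶜ ∈ C := by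
    have hlt := patternOn_lt_of_card_lt π (S := {y}ᶜ) (by have := hcard_compl y; omega)
    obtain ⟨τ, hτC, hτy, hτcard⟩ := (hβmin _ hlt).resolve_left (hdel y)
    obtain ⟨T, hTy, rfl⟩ := (permLE_patternOn_iff π).1 hτy
    obtain ⟨z, -, hzT⟩ := Finset.exists_eq_insert_iff.2 ⟨hTy, hτcard⟩
    refine ⟨z, hC _ _ (patternOn_mono π fun w hw => ?_) hτC⟩
    rw [Finset.mem_compl, Finset.mem_insert, Finset.mem_singleton, not_or] at hw
    have hw' : w ∈ insert z T := hzT ▸ Finset.mem_compl.2 (Finset.notMem_singleton.2 hw.1)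
    exact (Finset.mem_insert.1 hw').resolve_left hw.2
  have hsmall (S : Finset (Fin n)) (hS : patternOn π S ∉ C) :
      ∃ B ⊆ S, patternOn π B ∉ C ∧ B.card ≤ m := by
    obtain ⟨b, hb, hbS⟩ := exists_isBasisElt_permLE hS
    obtain ⟨B, hBS, rfl⟩ := (permLE_patternOn_iff π).1 hbS
    exact ⟨B, hBS, hb.1, hm _ hb⟩
  simpa using card_le_of_forall_exists_compl_pair (fun S => patternOn π S ∈ C) m
    (fun S T hTS hS => hC _ _ (patternOn_mono π hTS) hS) hsmall hdel hpair

theorem finite_setOf_length_le (M : ℕ) : {σ : Permutation | σ.1 ≤ M}.Finite :=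
  ((Finset.range (M + 1)).sigma fun _ => Finset.univ).finite_toSet.subset
    fun σ hσ => by simpa [Nat.lt_succ_iff] using hσ

theorem stmt_15_general (C : Set Permutation) (hC : IsPermClass C) (m : ℕ)
    (hm : ∀ β : Permutation, IsBasisElt C β → β.1 ≤ m) :
    {β : Permutation | IsBasisElt (OnePtExt C) β}.Finite ∧
      ∀ β : Permutation, IsBasisElt (OnePtExt C) β → β.1 ≤ m * (m + 1) := by
  have hlength (β : Permutation) (hβ : IsBasisElt (OnePtExt C) β) : β.1 ≤ m * (m + 1) :=
    hβ.length_le_of_onePtExt hC hm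
  exact ⟨(finite_setOf_length_le _).subset hlength, hlength⟩

/-- If `C` is finitely based with longest basis element of length `m`, then
`C⁺¹` is finitely based with no basis element of length more than `m(m+1)`. -/
theorem stmt_15 (C : Set Permutation) (hC : IsPermClass C) (m : ℕ)
    (hfin : {β : Permutation | IsBasisElt C β}.Finite)
    (hm : ∀ β : Permutation, IsBasisElt C β → β.1 ≤ m) :
    {β : Permutation | IsBasisElt (OnePtExt C) β}.Finite ∧
      ∀ β : Permutation, IsBasisElt (OnePtExt C) β → β.1 ≤ m * (m + 1) :=
  stmt_15_general C hC m hm
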